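/- For the period-doubling word pd, the abelian complexity ρ^{ab}_{pd} satisfies ρ^{ab}_{pd}(2ℓ) = ρ^{ab}_{pd}(ℓ) and ρ^{ab}_{pd}(4ℓ ± 1) = ρ^{ab}_{pd}(ℓ) + 1 for all ℓ ≥ 1, given ρ^{ab}_{pd}(1) = 2. Consequently any function ρ with ρ(ℓ) = ρ^{ab}_{pd}(ℓ) - 1 satisfies ρ(2ℓ) = ρ(ℓ) and ρ(4ℓ ± 1) = ρ(ℓ) + 1. -/

import Mathlib

/-- `u` is a factor of the infinite word `w`. -/
def IsFactorI {α : Type*} (u : List α) (w : ℕ → α) : Prop :=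
  ∃ j : ℕ, u = (List.range u.length).map (fun i => w (j + i))

/-- The period-doubling morphism `0 ↦ 01`, `1 ↦ 00`. -/
def pdMu : ℕ → List ℕ
  | 0 => [0, 1]
  | _ => [0, 0]

/-- Iterates of the period-doubling morphism on the letter `0`. -/
def pdIter : ℕ → List ℕ
  | 0 => [0]
  | k + 1 => (pdIter k).flatMap pdMu

/-- The period-doubling word, the fixed point of `0 ↦ 01`, `1 ↦ 00`. -/
def pd (n : ℕ) : ℕ := (pdIter (n + 1)).getD n 0

/-- The abelian complexity of `pd`: the number of Parikh vectors of length-`ℓ` factors. -/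
noncomputable def pdAb (ℓ : ℕ) : ℕ :=
  Nat.card {p : ℕ × ℕ // ∃ u : List ℕ, IsFactorI u pd ∧ u.length = ℓ ∧
    p = (u.count 0, u.count 1)}

/-!
Since `pd (2n) = 0` and `pd (2n+1) = 1 - pd n`, the number `S n` of `1`s among the first `n`
letters satisfies `S n + S ⌊n/2⌋ = ⌊n/2⌋`. Hence a window of length `ℓ` starting at `2i`
(resp. `2i+1`) contains `k - c` ones, where `c` is the number of ones of the window of length
`k = ⌊ℓ/2⌋` (resp. `k = ⌈ℓ/2⌉`) starting at `i`. Sliding a window changes its number of ones by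
at most one, so these numbers fill an interval `[m ℓ, M ℓ]` and `ρ^{ab}(ℓ) = M ℓ - m ℓ + 1`.
The window identities give `m ℓ = ⌊ℓ/2⌋ - M ⌊ℓ/2⌋` and `M ℓ = ⌈ℓ/2⌉ - m ⌈ℓ/2⌉`; unfolding them
twice yields the recurrences.
-/

lemma List.IsPrefix.getD_eq {α : Type*} {l₁ l₂ : List α} (h : l₁ <+: l₂) {n : ℕ}
    (hn : n < l₁.length) (d : α) : l₁.getD n d = l₂.getD n d := by
  obtain ⟨t, rfl⟩ := h
  exact (List.getD_append _ _ _ _ hn).symm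

theorem ordConnected_range_of_step_le_one {f : ℕ → ℕ}
    (hf : ∀ n, f (n + 1) ≤ f n + 1 ∧ f n ≤ f (n + 1) + 1) : (Set.range f).OrdConnected := by
  have between : ∀ i d x, (f i ≤ x ∧ x ≤ f (i + d)) ∨ (f (i + d) ≤ x ∧ x ≤ f i) →
      x ∈ Set.range f := by
    intro i d x
    induction d with
    | zero =>
      rw [add_zero]
      rintro (⟨h₁, h₂⟩ | ⟨h₁, h₂⟩) <;> exact ⟨i, by omega⟩
    | succ d ih =>
      intro hx
      by_cases hd : (f i ≤ x ∧ x ≤ f (i + d)) ∨ (f (i + d) ≤ x ∧ x ≤ f i)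
      · exact ih hd
      · rw [← Nat.add_assoc] at hx
        exact ⟨i + d + 1, by have := hf (i + d); omega⟩
  refine ⟨?_⟩
  rintro _ ⟨i, rfl⟩ _ ⟨j, rfl⟩ x ⟨hi, hj⟩
  rcases le_total i j with h | h
  · obtain ⟨d, rfl⟩ := Nat.exists_eq_add_of_le h
    exact between i d x (Or.inl ⟨hi, hj⟩)
  · obtain ⟨d, rfl⟩ := Nat.exists_eq_add_of_le h
    exact between j d x (Or.inr ⟨hi, hj⟩)

lemma pdIter_length (k : ℕ) : (pdIter k).length = 2 ^ k := by
  induction k with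
  | zero => rfl
  | succ k ih =>
    have hμ : ∀ x ∈ pdIter k, (pdMu x).length = 2 := fun x _ => by cases x <;> rfl
    rw [pdIter, List.length_flatMap, List.map_congr_left hμ]
    simp [ih, pow_succ]

lemma pdIter_prefix_succ (k : ℕ) : pdIter k <+: pdIter (k + 1) := by
  induction k with
  | zero => exact ⟨[1], rfl⟩
  | succ k ih =>
    obtain ⟨t, ht⟩ := ih
    exact ⟨t.flatMap pdMu, by rw [pdIter, pdIter, ← ht, List.flatMap_append]⟩

lemma pdIter_prefix_of_le {k K : ℕ} (h : k ≤ K) : pdIter k <+: pdIter K :=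
  Nat.le_induction (List.prefix_refl _) (fun n _ ih => ih.trans (pdIter_prefix_succ n)) K h

lemma pdIter_getD {k n : ℕ} (hn : n < 2 ^ k) : (pdIter k).getD n 0 = pd n := by
  have hn' : n < (pdIter (n + 1)).length := by
    rw [pdIter_length]
    exact Nat.lt_two_pow_self.trans (Nat.pow_lt_pow_succ one_lt_two)
  rw [pd, (pdIter_prefix_of_le (Nat.le_add_right k (n + 1))).getD_eq (by rwa [pdIter_length]),
    (pdIter_prefix_of_le (Nat.le_add_left (n + 1) k)).getD_eq hn']

lemma flatMap_pdMu_getD_two_mul (l : List ℕ) (n : ℕ) :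
    (l.flatMap pdMu).getD (2 * n) 0 = 0 := by
  induction l generalizing n with
  | nil => simp
  | cons x l ih =>
    cases n with
    | zero => cases x <;> rfl
    | succ n => cases x <;> simpa [pdMu, Nat.mul_succ] using ih n

lemma flatMap_pdMu_getD_two_mul_add_one {l : List ℕ} {n : ℕ} (hn : n < l.length) :
    (l.flatMap pdMu).getD (2 * n + 1) 0 = 1 - l.getD n 0 := by
  induction l generalizing n with
  | nil => simp at hn
  | cons x l ih =>
    cases n with
    | zero => cases x <;> simp [pdMu]
    | succ n => cases x <;> simpa [pdMu, Nat.mul_succ] using ih (by simpa using hn)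

lemma pd_two_mul (n : ℕ) : pd (2 * n) = 0 :=
  flatMap_pdMu_getD_two_mul _ n

lemma pd_two_mul_add_one (n : ℕ) : pd (2 * n + 1) = 1 - pd n := by
  have hn : n < 2 ^ (2 * n + 1) :=
    Nat.lt_two_pow_self.trans_le (Nat.pow_le_pow_right two_pos (by omega))
  rw [pd, pdIter, flatMap_pdMu_getD_two_mul_add_one (by rwa [pdIter_length]), pdIter_getD hn]

lemma pd_le_one (n : ℕ) : pd n ≤ 1 := by
  obtain ⟨k, rfl | rfl⟩ := Nat.even_or_odd' n
  · simp [pd_two_mul]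
  · simp [pd_two_mul_add_one]

def pdPrefixSum (n : ℕ) : ℕ := ∑ i ∈ Finset.range n, pd i

def pdWindowSum (j ℓ : ℕ) : ℕ := ∑ i ∈ Finset.range ℓ, pd (j + i)

lemma pdPrefixSum_succ (n : ℕ) : pdPrefixSum (n + 1) = pdPrefixSum n + pd n :=
  Finset.sum_range_succ _ _

lemma pdPrefixSum_add_pdPrefixSum_div_two (n : ℕ) :
    pdPrefixSum n + pdPrefixSum (n / 2) = n / 2 := by
  induction n with
  | zero => rfl
  | succ n ih =>
    obtain ⟨m, rfl | rfl⟩ := Nat.even_or_odd' n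
    · rw [show (2 * m + 1) / 2 = 2 * m / 2 by omega, pdPrefixSum_succ, pd_two_mul, add_zero, ih]
    · rw [show (2 * m + 1 + 1) / 2 = m + 1 by omega, pdPrefixSum_succ (2 * m + 1),
        pdPrefixSum_succ m, pd_two_mul_add_one]
      rw [show (2 * m + 1) / 2 = m by omega] at ih
      have := pd_le_one m
      omega

lemma pdWindowSum_add (j a b : ℕ) :
    pdWindowSum j (a + b) = pdWindowSum j a + pdWindowSum (j + a) b := by
  simp only [pdWindowSum, Finset.sum_range_add, add_assoc]

lemma pdPrefixSum_add_pdWindowSum (j ℓ : ℕ) :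
    pdPrefixSum j + pdWindowSum j ℓ = pdPrefixSum (j + ℓ) := by
  rw [pdPrefixSum, pdPrefixSum, pdWindowSum, Finset.sum_range_add]

lemma pdWindowSum_le (j ℓ : ℕ) : pdWindowSum j ℓ ≤ ℓ := by
  simpa [pdWindowSum] using
    Finset.sum_le_card_nsmul (Finset.range ℓ) _ 1 fun i _ => pd_le_one (j + i)

lemma pdWindowSum_succ_le_and_le (j ℓ : ℕ) :
    pdWindowSum (j + 1) ℓ ≤ pdWindowSum j ℓ + 1 ∧
      pdWindowSum j ℓ ≤ pdWindowSum (j + 1) ℓ + 1 := by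
  have h₁ := pdWindowSum_add j ℓ 1
  have h₂ := pdWindowSum_add j 1 ℓ
  rw [add_comm ℓ 1] at h₁
  have := pdWindowSum_le (j + ℓ) 1
  have := pdWindowSum_le j 1
  omega

lemma pdWindowSum_two_mul (i ℓ : ℕ) :
    pdWindowSum (2 * i) ℓ + pdWindowSum i (ℓ / 2) = ℓ / 2 := by
  have h₁ := pdPrefixSum_add_pdPrefixSum_div_two (2 * i)
  have h₂ := pdPrefixSum_add_pdPrefixSum_div_two (2 * i + ℓ)
  have h₃ := pdPrefixSum_add_pdWindowSum (2 * i) ℓ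
  have h₄ := pdPrefixSum_add_pdWindowSum i (ℓ / 2)
  rw [show 2 * i / 2 = i by omega] at h₁
  rw [show (2 * i + ℓ) / 2 = i + ℓ / 2 by omega] at h₂
  omega

lemma pdWindowSum_two_mul_add_one (i ℓ : ℕ) :
    pdWindowSum (2 * i + 1) ℓ + pdWindowSum i ((ℓ + 1) / 2) = (ℓ + 1) / 2 := by
  have h₁ := pdPrefixSum_add_pdPrefixSum_div_two (2 * i + 1)
  have h₂ := pdPrefixSum_add_pdPrefixSum_div_two (2 * i + 1 + ℓ)
  have h₃ := pdPrefixSum_add_pdWindowSum (2 * i + 1) ℓ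
  have h₄ := pdPrefixSum_add_pdWindowSum i ((ℓ + 1) / 2)
  rw [show (2 * i + 1) / 2 = i by omega] at h₁
  rw [show (2 * i + 1 + ℓ) / 2 = i + (ℓ + 1) / 2 by omega] at h₂
  omega

def pdWindowSums (ℓ : ℕ) : Set ℕ := Set.range (pdWindowSum · ℓ)

noncomputable def pdWindowMin (ℓ : ℕ) : ℕ := sInf (pdWindowSums ℓ)

noncomputable def pdWindowMax (ℓ : ℕ) : ℕ := sSup (pdWindowSums ℓ)

lemma pdWindowSum_mem (j ℓ : ℕ) : pdWindowSum j ℓ ∈ pdWindowSums ℓ := Set.mem_range_self j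

lemma bddAbove_pdWindowSums (ℓ : ℕ) : BddAbove (pdWindowSums ℓ) :=
  ⟨ℓ, by rintro _ ⟨j, rfl⟩; exact pdWindowSum_le j ℓ⟩

lemma isLeast_pdWindowMin (ℓ : ℕ) : IsLeast (pdWindowSums ℓ) (pdWindowMin ℓ) :=
  isLeast_csInf (Set.range_nonempty _)

lemma isGreatest_pdWindowMax (ℓ : ℕ) : IsGreatest (pdWindowSums ℓ) (pdWindowMax ℓ) :=
  ⟨Nat.sSup_mem (Set.range_nonempty _) (bddAbove_pdWindowSums ℓ),
    fun _ hx => le_csSup (bddAbove_pdWindowSums ℓ) hx⟩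

lemma pdWindowSums_eq_Icc (ℓ : ℕ) :
    pdWindowSums ℓ = Set.Icc (pdWindowMin ℓ) (pdWindowMax ℓ) :=
  Set.Subset.antisymm
    (fun _ hx => ⟨(isLeast_pdWindowMin ℓ).2 hx, (isGreatest_pdWindowMax ℓ).2 hx⟩)
    ((ordConnected_range_of_step_le_one (pdWindowSum_succ_le_and_le · ℓ)).out
      (isLeast_pdWindowMin ℓ).1 (isGreatest_pdWindowMax ℓ).1)

lemma pdWindowMin_le_pdWindowMax (ℓ : ℕ) : pdWindowMin ℓ ≤ pdWindowMax ℓ :=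
  (isLeast_pdWindowMin ℓ).2 (isGreatest_pdWindowMax ℓ).1

lemma pdWindowMax_le (ℓ : ℕ) : pdWindowMax ℓ ≤ ℓ := by
  obtain ⟨j, hj⟩ := (isGreatest_pdWindowMax ℓ).1
  exact hj ▸ pdWindowSum_le j ℓ

lemma pdWindowMin_le_of_le {a b : ℕ} (h : a ≤ b) :
    pdWindowMin b ≤ pdWindowMin a + (b - a) := by
  obtain ⟨j, hj : pdWindowSum j a = pdWindowMin a⟩ := (isLeast_pdWindowMin a).1
  have hsplit := pdWindowSum_add j a (b - a)
  rw [Nat.add_sub_cancel' h] at hsplit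
  have := (isLeast_pdWindowMin b).2 (pdWindowSum_mem j b)
  have := pdWindowSum_le (j + a) (b - a)
  omega

lemma pdWindowMax_le_of_le {a b : ℕ} (h : a ≤ b) :
    pdWindowMax b ≤ pdWindowMax a + (b - a) := by
  obtain ⟨j, hj : pdWindowSum j b = pdWindowMax b⟩ := (isGreatest_pdWindowMax b).1
  have hsplit := pdWindowSum_add j a (b - a)
  rw [Nat.add_sub_cancel' h] at hsplit
  have := (isGreatest_pdWindowMax a).2 (pdWindowSum_mem j a)
  have := pdWindowSum_le (j + a) (b - a)
  omega

lemma pdWindowMin_eq_sub_pdWindowMax (n : ℕ) :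
    pdWindowMin n = n / 2 - pdWindowMax (n / 2) := by
  refine IsLeast.csInf_eq ⟨?_, ?_⟩
  · obtain ⟨i, hi : pdWindowSum i (n / 2) = _⟩ := (isGreatest_pdWindowMax (n / 2)).1
    refine ⟨2 * i, show pdWindowSum _ n = _ from ?_⟩
    have := pdWindowSum_two_mul i n
    omega
  · rintro _ ⟨j, rfl⟩
    obtain ⟨i, rfl | rfl⟩ := Nat.even_or_odd' j
    all_goals dsimp only
    · have := pdWindowSum_two_mul i n
      have := (isGreatest_pdWindowMax (n / 2)).2 (pdWindowSum_mem i _)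
      omega
    · have := pdWindowSum_two_mul_add_one i n
      have := (isGreatest_pdWindowMax ((n + 1) / 2)).2 (pdWindowSum_mem i _)
      have := pdWindowMax_le_of_le (show n / 2 ≤ (n + 1) / 2 by omega)
      omega

lemma pdWindowMax_eq_sub_pdWindowMin (n : ℕ) :
    pdWindowMax n = (n + 1) / 2 - pdWindowMin ((n + 1) / 2) := by
  refine IsGreatest.csSup_eq ⟨?_, ?_⟩
  · obtain ⟨i, hi : pdWindowSum i ((n + 1) / 2) = _⟩ := (isLeast_pdWindowMin ((n + 1) / 2)).1
    refine ⟨2 * i + 1, show pdWindowSum _ n = _ from ?_⟩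
    have := pdWindowSum_two_mul_add_one i n
    omega
  · rintro _ ⟨j, rfl⟩
    obtain ⟨i, rfl | rfl⟩ := Nat.even_or_odd' j
    all_goals dsimp only
    · have := pdWindowSum_two_mul i n
      have := (isLeast_pdWindowMin (n / 2)).2 (pdWindowSum_mem i _)
      have := pdWindowMin_le_of_le (show n / 2 ≤ (n + 1) / 2 by omega)
      omega
    · have := pdWindowSum_two_mul_add_one i n
      have := (isLeast_pdWindowMin ((n + 1) / 2)).2 (pdWindowSum_mem i _)
      omega

def pdFactor (j ℓ : ℕ) : List ℕ := (List.range ℓ).map (fun i => pd (j + i))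

lemma isFactorI_pd_and_length_eq_iff {u : List ℕ} {ℓ : ℕ} :
    IsFactorI u pd ∧ u.length = ℓ ↔ ∃ j, u = pdFactor j ℓ := by
  constructor
  · rintro ⟨⟨j, hj⟩, rfl⟩
    exact ⟨j, hj⟩
  · rintro ⟨j, rfl⟩
    exact ⟨⟨j, by simp [pdFactor]⟩, by simp [pdFactor]⟩

lemma count_pdFactor (j ℓ : ℕ) :
    (pdFactor j ℓ).count 0 = ℓ - pdWindowSum j ℓ ∧
      (pdFactor j ℓ).count 1 = pdWindowSum j ℓ := by
  induction ℓ with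
  | zero => simp [pdFactor, pdWindowSum]
  | succ ℓ ih =>
    have hsucc : pdWindowSum j (ℓ + 1) = pdWindowSum j ℓ + pd (j + ℓ) :=
      Finset.sum_range_succ _ _
    simp only [pdFactor, List.range_succ, List.map_append, List.count_append] at ih ⊢
    have := pdWindowSum_le j ℓ
    rcases Nat.le_one_iff_eq_zero_or_eq_one.mp (pd_le_one (j + ℓ)) with h | h <;>
      simp [h, hsucc] <;> omega

lemma pdAb_eq_ncard (ℓ : ℕ) : pdAb ℓ = (pdWindowSums ℓ).ncard := by
  have hparikh : {p : ℕ × ℕ | ∃ u : List ℕ, IsFactorI u pd ∧ u.length = ℓ ∧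
      p = (u.count 0, u.count 1)} = (fun x => (ℓ - x, x)) '' pdWindowSums ℓ := by
    ext p
    simp only [Set.mem_ofPred_eq, Set.mem_image, ← and_assoc, isFactorI_pd_and_length_eq_iff]
    constructor
    · rintro ⟨_, ⟨j, rfl⟩, rfl⟩
      exact ⟨_, pdWindowSum_mem j ℓ, by rw [(count_pdFactor j ℓ).1, (count_pdFactor j ℓ).2]⟩
    · rintro ⟨_, ⟨j, rfl⟩, rfl⟩
      exact ⟨pdFactor j ℓ, ⟨j, rfl⟩, by rw [(count_pdFactor j ℓ).1, (count_pdFactor j ℓ).2]⟩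
  rw [pdAb, ← Set.coe_ofPred, Nat.card_coe_set_eq, hparikh,
    Set.ncard_image_of_injective _ fun _ _ h => congrArg Prod.snd h]

lemma pdAb_eq (ℓ : ℕ) : pdAb ℓ = pdWindowMax ℓ + 1 - pdWindowMin ℓ := by
  rw [pdAb_eq_ncard, pdWindowSums_eq_Icc, Set.ncard_Icc_nat]

lemma pdWindowMin_two_mul (m : ℕ) : pdWindowMin (2 * m) = m - pdWindowMax m := by
  rw [pdWindowMin_eq_sub_pdWindowMax, Nat.mul_div_cancel_left m two_pos]

lemma pdWindowMax_two_mul (m : ℕ) : pdWindowMax (2 * m) = m - pdWindowMin m := by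
  rw [pdWindowMax_eq_sub_pdWindowMin, show (2 * m + 1) / 2 = m by omega]

lemma pdWindowMin_two_mul_add_one (m : ℕ) : pdWindowMin (2 * m + 1) = m - pdWindowMax m := by
  rw [pdWindowMin_eq_sub_pdWindowMax, show (2 * m + 1) / 2 = m by omega]

lemma pdWindowMax_two_mul_add_one (m : ℕ) :
    pdWindowMax (2 * m + 1) = m + 1 - pdWindowMin (m + 1) := by
  rw [pdWindowMax_eq_sub_pdWindowMin, show (2 * m + 1 + 1) / 2 = m + 1 by omega]

lemma pdAb_pos (ℓ : ℕ) : 0 < pdAb ℓ := by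
  rw [pdAb_eq]
  have := pdWindowMin_le_pdWindowMax ℓ
  omega

lemma pdAb_one : pdAb 1 = 2 := by
  have hmin : pdWindowMin 1 = 0 := by simpa using pdWindowMin_two_mul_add_one 0
  have hmax : pdWindowMax 1 = 1 := by simpa [hmin] using pdWindowMax_two_mul_add_one 0
  rw [pdAb_eq, hmin, hmax]

lemma pdAb_two_mul (ℓ : ℕ) : pdAb (2 * ℓ) = pdAb ℓ := by
  rw [pdAb_eq, pdAb_eq, pdWindowMin_two_mul, pdWindowMax_two_mul]
  have := pdWindowMin_le_pdWindowMax ℓ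
  have := pdWindowMax_le ℓ
  omega

lemma pdAb_four_mul_add_one (ℓ : ℕ) : pdAb (4 * ℓ + 1) = pdAb ℓ + 1 := by
  rw [pdAb_eq, pdAb_eq, show 4 * ℓ + 1 = 2 * (2 * ℓ) + 1 by ring, pdWindowMin_two_mul_add_one,
    pdWindowMax_two_mul_add_one, pdWindowMax_two_mul, pdWindowMin_two_mul_add_one]
  have := pdWindowMin_le_pdWindowMax ℓ
  have := pdWindowMax_le ℓ
  omega

lemma pdAb_four_mul_sub_one {ℓ : ℕ} (hℓ : 0 < ℓ) : pdAb (4 * ℓ - 1) = pdAb ℓ + 1 := by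
  obtain ⟨k, rfl⟩ := Nat.exists_eq_add_of_lt hℓ
  rw [pdAb_eq, pdAb_eq, show 4 * (0 + k + 1) - 1 = 2 * (2 * k + 1) + 1 by omega,
    pdWindowMin_two_mul_add_one, pdWindowMax_two_mul_add_one, pdWindowMax_two_mul_add_one,
    show 2 * k + 1 + 1 = 2 * (k + 1) by ring, pdWindowMin_two_mul, zero_add]
  have := pdWindowMin_le_pdWindowMax (k + 1)
  have := pdWindowMax_le (k + 1)
  omega

theorem pd_abelian_complexity_recurrences :
    pdAb 1 = 2 ∧
    (∀ ℓ : ℕ, 1 ≤ ℓ →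
      pdAb (2 * ℓ) = pdAb ℓ ∧
      pdAb (4 * ℓ + 1) = pdAb ℓ + 1 ∧
      pdAb (4 * ℓ - 1) = pdAb ℓ + 1) ∧
    (∀ ρ : ℕ → ℕ, (∀ ℓ : ℕ, ρ ℓ = pdAb ℓ - 1) →
      ∀ ℓ : ℕ, 1 ≤ ℓ →
        ρ (2 * ℓ) = ρ ℓ ∧ ρ (4 * ℓ + 1) = ρ ℓ + 1 ∧ ρ (4 * ℓ - 1) = ρ ℓ + 1) := by
  have hrec : ∀ ℓ : ℕ, 1 ≤ ℓ →
      pdAb (2 * ℓ) = pdAb ℓ ∧ pdAb (4 * ℓ + 1) = pdAb ℓ + 1 ∧ pdAb (4 * ℓ - 1) = pdAb ℓ + 1 :=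
    fun ℓ hℓ => ⟨pdAb_two_mul ℓ, pdAb_four_mul_add_one ℓ, pdAb_four_mul_sub_one hℓ⟩
  refine ⟨pdAb_one, hrec, fun ρ hρ ℓ hℓ => ?_⟩
  obtain ⟨hdouble, hplus, hminus⟩ := hrec ℓ hℓ
  have := pdAb_pos ℓ
  simp only [hρ]
  rw [hdouble, hplus, hminus]
  omega
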